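/- arXiv:2312.12488 — 2 statements merged into one kernel-verified Lean document; each statement's English description precedes it below -/
import Mathlib

section
/- Let g : ℝⁿ → ℝᵐ satisfy the reverse Lipschitz (expansivity) bound ‖g(x₁) - g(x₂)‖ ≥ M ‖x₁ - x₂‖ for all x₁, x₂, with M > 0, and let L(x) = ‖g(x) - g*‖². Suppose the update Δx = -μ ∇L(x) with step size μ > 0 satisfies g(x + Δx) = g(x) + J Δx exactly, where J is the Jacobian of g at x. Then L(x + Δx) ≥ L(x) - (1/(4M²)) ‖∇L(x)‖². -/
open Matrix RealInnerProductSpace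

/-- one-step lower bound on the L2 gradient matching loss when the
gradient map `g` is `M`-expansive (reverse Lipschitz), with exact first-order
Taylor expansion along the descent step of an arbitrary step size `μ > 0`. -/
theorem gradient_matching_descent_lower_bound
    {n m : ℕ} (g : EuclideanSpace ℝ (Fin n) → EuclideanSpace ℝ (Fin m))
    (gstar : EuclideanSpace ℝ (Fin m)) (M : ℝ) (hM : 0 < M)
    (hExp : ∀ x₁ x₂, M * ‖x₁ - x₂‖ ≤ ‖g x₁ - g x₂‖)
    (J : Matrix (Fin m) (Fin n) ℝ) (x : EuclideanSpace ℝ (Fin n))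
    (gradL : EuclideanSpace ℝ (Fin n))
    (hgrad : gradL = (2 : ℝ) • (WithLp.equiv 2 (Fin n → ℝ)).symm
      (Jᵀ.mulVec ((WithLp.equiv 2 (Fin m → ℝ)) (g x - gstar))))
    (μ : ℝ) (hμ : 0 < μ)
    (Δx : EuclideanSpace ℝ (Fin n))
    (hΔx : Δx = -μ • gradL)
    (hTaylor : g (x + Δx) = g x +
      (WithLp.equiv 2 (Fin m → ℝ)).symm (J.mulVec ((WithLp.equiv 2 (Fin n → ℝ)) Δx))) :
    ‖g x - gstar‖ ^ 2 - (1 / (4 * M ^ 2)) * ‖gradL‖ ^ 2 ≤ ‖g (x + Δx) - gstar‖ ^ 2 := by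
  set r := g x - gstar with hr
  set u : EuclideanSpace ℝ (Fin m) :=
    (WithLp.equiv 2 (Fin m → ℝ)).symm (J.mulVec ((WithLp.equiv 2 (Fin n → ℝ)) Δx)) with hu
  have hsum : g (x + Δx) - gstar = r + u := by
    rw [hTaylor, hr]; abel
  -- expansivity gives ‖u‖ ≥ M μ ‖gradL‖
  have hgu : g (x + Δx) - g x = u := by rw [hTaylor]; abel
  have hnorm_u : M * (μ * ‖gradL‖) ≤ ‖u‖ := by
    have := hExp (x + Δx) x
    rw [hgu] at this
    have hxx : x + Δx - x = Δx := by abel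
    rw [hxx, hΔx] at this
    simpa [norm_smul, abs_of_pos hμ, mul_assoc] using this
  -- inner product identity
  have hinner : ⟪r, u⟫ = -(μ / 2) * ‖gradL‖ ^ 2 := by
    have h1 : ⟪r, u⟫ = (WithLp.equiv 2 (Fin m → ℝ)) r ⬝ᵥ
        J.mulVec ((WithLp.equiv 2 (Fin n → ℝ)) Δx) := by
      simp [hu, PiLp.inner_apply, dotProduct, RCLike.inner_apply, mul_comm]
    rw [h1, Matrix.dotProduct_mulVec, ← Matrix.mulVec_transpose]
    have h2 : Jᵀ.mulVec ((WithLp.equiv 2 (Fin m → ℝ)) r) =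
        (2 : ℝ)⁻¹ • ((WithLp.equiv 2 (Fin n → ℝ)) gradL) := by
      rw [hgrad]; ext i; simp
    rw [h2]
    have h3 : ((WithLp.equiv 2 (Fin n → ℝ)) gradL) ⬝ᵥ ((WithLp.equiv 2 (Fin n → ℝ)) Δx)
        = ⟪gradL, Δx⟫ := by
      simp [PiLp.inner_apply, dotProduct, RCLike.inner_apply, mul_comm]
    rw [smul_dotProduct, h3, hΔx, real_inner_smul_right,
      real_inner_self_eq_norm_sq, smul_eq_mul]
    ring
  rw [hsum, norm_add_sq_real, hinner]
  have hG : (0:ℝ) ≤ ‖gradL‖ := norm_nonneg _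
  have key : M ^ 2 * μ ^ 2 * ‖gradL‖ ^ 2 ≤ ‖u‖ ^ 2 := by
    nlinarith [hnorm_u, mul_nonneg (mul_nonneg hM.le hμ.le) hG]
  have hscal : -(1 / (4 * M ^ 2)) ≤ M ^ 2 * μ ^ 2 - μ := by
    have h : (M * μ - 1 / (2 * M)) ^ 2 = M ^ 2 * μ ^ 2 - μ + 1 / (4 * M ^ 2) := by
      field_simp
      ring
    nlinarith [sq_nonneg (M * μ - 1 / (2 * M))]
  have hfin : -(1 / (4 * M ^ 2)) * ‖gradL‖ ^ 2 ≤ (M ^ 2 * μ ^ 2 - μ) * ‖gradL‖ ^ 2 :=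
    mul_le_mul_of_nonneg_right hscal (sq_nonneg _)
  nlinarith [key, hfin]
end

section
/- Let g : ℝⁿ → ℝᵐ be twice continuously differentiable with g* = g(x*) ≠ 0, and define the cosine distance loss L(x) = 1 - ⟨g*, g(x)⟩ / (‖g*‖ ‖g(x)‖). Then the Hessian of L at x* equals (1/‖g*‖²) J(x*)ᵀ (I - (g*/‖g*‖)(g*/‖g*‖)ᵀ) J(x*), where J(x*) is the Jacobian of g at x*. -/
open Matrix RealInnerProductSpace

section Aux

variable {F : Type*} [NormedAddCommGroup F] [InnerProductSpace ℝ F]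

theorem hasFDerivAt_norm_aux (y : F) (hy : y ≠ 0) :
    HasFDerivAt (fun z : F => ‖z‖) (‖y‖⁻¹ • (innerSL ℝ y : F →L[ℝ] ℝ)) y := by
  have h1 : HasFDerivAt (fun z : F => (⟪z, z⟫ : ℝ))
      ((fderivInnerCLM ℝ (y, y)).comp ((ContinuousLinearMap.id ℝ F).prod (ContinuousLinearMap.id ℝ F))) y :=
    (hasFDerivAt_id y).inner ℝ (hasFDerivAt_id y)
  have h0 : (⟪y, y⟫ : ℝ) ≠ 0 := by
    simpa [real_inner_self_eq_norm_sq] using pow_ne_zero 2 (norm_ne_zero_iff.2 hy)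
  have h2 := h1.sqrt h0
  have heq : (fun z : F => Real.sqrt (⟪z, z⟫ : ℝ)) = fun z : F => ‖z‖ := by
    funext z; rw [norm_eq_sqrt_real_inner]
  rw [heq] at h2
  convert h2 using 1
  ext v
  have : Real.sqrt ⟪y, y⟫ = ‖y‖ := (norm_eq_sqrt_real_inner y).symm
  simp [this, fderivInnerCLM_apply, real_inner_comm y v]
  ring

noncomputable def innerR : F →L[ℝ] F →L[ℝ] ℝ := innerSL ℝ

noncomputable def D1 (gs : F) (y : F) : F →L[ℝ] ℝ :=
  (-(‖gs‖ * ‖y‖)⁻¹) • (innerSL ℝ gs : F →L[ℝ] ℝ) +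
    ((⟪gs, y⟫ : ℝ) * (‖gs‖ * ‖y‖ ^ 3)⁻¹) • (innerSL ℝ y : F →L[ℝ] ℝ)

noncomputable def D2 (gs : F) : F →L[ℝ] F →L[ℝ] ℝ :=
  (‖gs‖ ^ 2)⁻¹ • (innerR : F →L[ℝ] F →L[ℝ] ℝ) -
    (‖gs‖ ^ 4)⁻¹ • ((innerSL ℝ gs : F →L[ℝ] ℝ).smulRight (innerSL ℝ gs : F →L[ℝ] ℝ))

theorem D2_apply (gs : F) (w v : F) :
    D2 gs w v = (‖gs‖ ^ 2)⁻¹ * ⟪w, v⟫ - (‖gs‖ ^ 4)⁻¹ * (⟪gs, w⟫ * ⟪gs, v⟫) := by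
  simp [D2, innerR, smul_eq_mul, mul_assoc]
  exact Or.inl rfl

theorem hasFDerivAt_phi (gs : F) (hgs : gs ≠ 0) (y : F) (hy : y ≠ 0) :
    HasFDerivAt (fun z : F => 1 - (⟪gs, z⟫ : ℝ) / (‖gs‖ * ‖z‖)) (D1 gs y) y := by
  have hcy : ‖y‖ ≠ 0 := norm_ne_zero_iff.2 hy
  have hcs : ‖gs‖ ≠ 0 := norm_ne_zero_iff.2 hgs
  have hnum : HasFDerivAt (fun z : F => (⟪gs, z⟫ : ℝ)) (innerSL ℝ gs) y :=
    (innerSL ℝ gs : F →L[ℝ] ℝ).hasFDerivAt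
  have hden : HasFDerivAt (fun z : F => ‖gs‖ * ‖z‖)
      (‖gs‖ • (‖y‖⁻¹ • (innerSL ℝ y : F →L[ℝ] ℝ))) y :=
    (hasFDerivAt_norm_aux y hy).const_mul ‖gs‖
  have hden0 : ‖gs‖ * ‖y‖ ≠ 0 := mul_ne_zero hcs hcy
  have hinv : HasFDerivAt (fun z : F => (‖gs‖ * ‖z‖)⁻¹)
      ((-((‖gs‖ * ‖y‖) ^ 2)⁻¹) • (‖gs‖ • (‖y‖⁻¹ • (innerSL ℝ y : F →L[ℝ] ℝ)))) y :=
    (hasDerivAt_inv hden0).comp_hasFDerivAt y hden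
  have h : HasFDerivAt (fun z : F => 1 - (⟪gs, z⟫ : ℝ) * (‖gs‖ * ‖z‖)⁻¹) _ y :=
    (hasFDerivAt_const (1:ℝ) y).sub (hnum.mul hinv)
  have hfun : (fun z : F => 1 - (⟪gs, z⟫ : ℝ) / (‖gs‖ * ‖z‖)) =
      fun z : F => 1 - (⟪gs, z⟫ : ℝ) * (‖gs‖ * ‖z‖)⁻¹ := by
    funext z; rw [div_eq_mul_inv]
  rw [hfun]
  refine h.congr_fderiv ?_
  ext v
  simp [D1, ContinuousLinearMap.smul_apply, smul_eq_mul]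
  field_simp

theorem D1_self (gs : F) (hgs : gs ≠ 0) : D1 gs gs = 0 := by
  have hcs : ‖gs‖ ≠ 0 := norm_ne_zero_iff.2 hgs
  ext v
  simp [D1, real_inner_self_eq_norm_sq, smul_eq_mul]
  field_simp
  ring

theorem hasFDerivAt_D1 (gs : F) (hgs : gs ≠ 0) : HasFDerivAt (D1 gs) (D2 gs) gs := by
  have hcs : ‖gs‖ ≠ 0 := norm_ne_zero_iff.2 hgs
  have hden0 : ‖gs‖ * ‖gs‖ ≠ 0 := mul_ne_zero hcs hcs
  have hden : HasFDerivAt (fun z : F => ‖gs‖ * ‖z‖)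
      (‖gs‖ • (‖gs‖⁻¹ • (innerSL ℝ gs : F →L[ℝ] ℝ))) gs :=
    (hasFDerivAt_norm_aux gs hgs).const_mul ‖gs‖
  have hinv : HasFDerivAt (fun z : F => (‖gs‖ * ‖z‖)⁻¹)
      ((-((‖gs‖ * ‖gs‖) ^ 2)⁻¹) • (‖gs‖ • (‖gs‖⁻¹ • (innerSL ℝ gs : F →L[ℝ] ℝ)))) gs :=
    (hasDerivAt_inv hden0).comp_hasFDerivAt gs hden
  have ha := hinv.neg
  have hterm1 := ha.smul_const (innerSL ℝ gs : F →L[ℝ] ℝ)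
  have hpow : HasFDerivAt (fun z : F => ‖z‖ ^ 3)
      ((3 * ‖gs‖ ^ 2) • (‖gs‖⁻¹ • (innerSL ℝ gs : F →L[ℝ] ℝ))) gs := by
    have h3 : HasDerivAt (fun x : ℝ => x ^ 3) ((3:ℕ) * ‖gs‖ ^ (3-1)) ‖gs‖ := hasDerivAt_pow 3 ‖gs‖
    have := h3.comp_hasFDerivAt gs (hasFDerivAt_norm_aux gs hgs)
    norm_num at this
    exact this
  have hden3 : HasFDerivAt (fun z : F => ‖gs‖ * ‖z‖ ^ 3)
      (‖gs‖ • ((3 * ‖gs‖ ^ 2) • (‖gs‖⁻¹ • (innerSL ℝ gs : F →L[ℝ] ℝ)))) gs :=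
    hpow.const_mul ‖gs‖
  have hden30 : ‖gs‖ * ‖gs‖ ^ 3 ≠ 0 := by positivity
  have hinv3 : HasFDerivAt (fun z : F => (‖gs‖ * ‖z‖ ^ 3)⁻¹)
      ((-((‖gs‖ * ‖gs‖ ^ 3) ^ 2)⁻¹) • (‖gs‖ • ((3 * ‖gs‖ ^ 2) • (‖gs‖⁻¹ • (innerSL ℝ gs : F →L[ℝ] ℝ))))) gs :=
    (hasDerivAt_inv hden30).comp_hasFDerivAt gs hden3
  have hnum : HasFDerivAt (fun z : F => (⟪gs, z⟫ : ℝ)) (innerSL ℝ gs) gs :=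
    (innerSL ℝ gs : F →L[ℝ] ℝ).hasFDerivAt
  have hb := hnum.mul hinv3
  have hterm2 := hb.smul ((innerR : F →L[ℝ] F →L[ℝ] ℝ).hasFDerivAt (x := gs))
  have h : HasFDerivAt (fun y : F => (-(‖gs‖ * ‖y‖)⁻¹) • (innerSL ℝ gs : F →L[ℝ] ℝ) +
      ((⟪gs, y⟫ : ℝ) * (‖gs‖ * ‖y‖ ^ 3)⁻¹) • innerR y) _ gs := hterm1.add hterm2
  have hfun : D1 gs = fun y : F => (-(‖gs‖ * ‖y‖)⁻¹) • (innerSL ℝ gs : F →L[ℝ] ℝ) +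
      ((⟪gs, y⟫ : ℝ) * (‖gs‖ * ‖y‖ ^ 3)⁻¹) • innerR y := rfl
  rw [hfun]
  refine h.congr_fderiv ?_
  ext w v
  simp [D2, innerR, ContinuousLinearMap.smul_apply, smul_eq_mul, real_inner_self_eq_norm_sq]
  field_simp
  rw [show ((innerSL ℝ) gs) v = (⟪gs, v⟫ : ℝ) from rfl]
  ring

end Aux

/-- the Hessian of the cosine-distance gradient matching loss
`L(x) = 1 - ⟨g*, g(x)⟩/(‖g*‖‖g(x)‖)` at the ground truth `x*` (where
`g* = g(x*) ≠ 0`) equals `(1/‖g*‖²) Jᵀ (I - (g*/‖g*‖)(g*/‖g*‖)ᵀ) J`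
as a bilinear form, `J` being the Jacobian of `g` at `x*`. -/
theorem hessian_cosine_at_ground_truth
    {n m : ℕ} (g : EuclideanSpace ℝ (Fin n) → EuclideanSpace ℝ (Fin m))
    (hg : ContDiff ℝ 2 g)
    (xstar : EuclideanSpace ℝ (Fin n)) (gstar : EuclideanSpace ℝ (Fin m))
    (hgstar : gstar = g xstar) (hne : gstar ≠ 0)
    (J : Matrix (Fin m) (Fin n) ℝ)
    (hJ : ∀ v, fderiv ℝ g xstar v =
      (WithLp.equiv 2 (Fin m → ℝ)).symm (J.mulVec ((WithLp.equiv 2 (Fin n → ℝ)) v)))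
    (ustar : Fin m → ℝ)
    (hustar : ustar = (WithLp.equiv 2 (Fin m → ℝ)) ((‖gstar‖⁻¹ : ℝ) • gstar)) :
    ∀ u v : EuclideanSpace ℝ (Fin n),
      fderiv ℝ (fun x => fderiv ℝ
          (fun y => 1 - (inner ℝ gstar (g y) : ℝ) / (‖gstar‖ * ‖g y‖)) x) xstar u v =
        (WithLp.equiv 2 (Fin n → ℝ)) u ⬝ᵥ
          (((‖gstar‖ ^ 2)⁻¹ •
            (Jᵀ * ((1 : Matrix (Fin m) (Fin m) ℝ) - Matrix.vecMulVec ustar ustar) * J)).mulVec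
              ((WithLp.equiv 2 (Fin n → ℝ)) v)) := by
  intro u v
  have hgdiff : Differentiable ℝ g := hg.differentiable (by norm_num)
  have hgs' : g xstar ≠ 0 := hgstar ▸ hne
  have hopen : ∀ᶠ x in nhds xstar, g x ≠ 0 :=
    hgdiff.continuous.continuousAt.eventually_ne hgs'
  have hEv : (fun x => fderiv ℝ
        (fun y => 1 - (inner ℝ gstar (g y) : ℝ) / (‖gstar‖ * ‖g y‖)) x)
      =ᶠ[nhds xstar] fun x => (D1 gstar (g x)).comp (fderiv ℝ g x) := by
    filter_upwards [hopen] with x hx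
    have := ((hasFDerivAt_phi gstar hne (g x) hx).comp x (hgdiff x).hasFDerivAt)
    exact this.fderiv
  have hc : HasFDerivAt (fun x => D1 gstar (g x))
      ((D2 gstar).comp (fderiv ℝ g xstar)) xstar := by
    have h1 : HasFDerivAt (D1 gstar) (D2 gstar) (g xstar) := by
      rw [← hgstar]; exact hasFDerivAt_D1 gstar hne
    exact h1.comp xstar (hgdiff xstar).hasFDerivAt
  have hfd : ContDiff ℝ 1 (fderiv ℝ g) := hg.fderiv_right (by norm_num)
  have hd : HasFDerivAt (fun x => fderiv ℝ g x) (fderiv ℝ (fderiv ℝ g) xstar) xstar :=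
    (hfd.differentiable one_ne_zero xstar).hasFDerivAt
  have htot := hc.clm_comp hd
  rw [hEv.fderiv_eq, htot.fderiv]
  have hD10 : D1 gstar (g xstar) = 0 := by rw [← hgstar]; exact D1_self gstar hne
  have hmain : (((ContinuousLinearMap.compL ℝ (EuclideanSpace ℝ (Fin n))
      (EuclideanSpace ℝ (Fin m)) ℝ (D1 gstar (g xstar))).comp (fderiv ℝ (fderiv ℝ g) xstar) +
      ((ContinuousLinearMap.compL ℝ (EuclideanSpace ℝ (Fin n)) (EuclideanSpace ℝ (Fin m)) ℝ).flip
        (fderiv ℝ g xstar)).comp ((D2 gstar).comp (fderiv ℝ g xstar))) u) v =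
      D2 gstar (fderiv ℝ g xstar u) (fderiv ℝ g xstar v) := by
    simp [hD10]
  rw [hmain, hJ u, hJ v, D2_apply]
  -- now pure computation
  have hcs : ‖gstar‖ ≠ 0 := norm_ne_zero_iff.2 hne
  set u' := (WithLp.equiv 2 (Fin n → ℝ)) u with hu'
  set v' := (WithLp.equiv 2 (Fin n → ℝ)) v with hv'
  set a := J.mulVec u' with hA
  set b := J.mulVec v' with hB
  set gs' := (WithLp.equiv 2 (Fin m → ℝ)) gstar with hgs''
  have hinner : ∀ p q : Fin m → ℝ,
      (⟪(WithLp.equiv 2 (Fin m → ℝ)).symm p, (WithLp.equiv 2 (Fin m → ℝ)).symm q⟫ : ℝ) = p ⬝ᵥ q := by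
    intro p q
    simp [PiLp.inner_apply, RCLike.inner_apply, dotProduct]
    exact Finset.sum_congr rfl fun i _ => mul_comm _ _
  have hinnerg : ∀ p : Fin m → ℝ,
      (⟪gstar, (WithLp.equiv 2 (Fin m → ℝ)).symm p⟫ : ℝ) = gs' ⬝ᵥ p := by
    intro p
    simp [PiLp.inner_apply, RCLike.inner_apply, dotProduct, hgs'']
    exact Finset.sum_congr rfl fun i _ => mul_comm _ _
  rw [hinner, hinnerg, hinnerg]
  have hust : ustar = fun i => ‖gstar‖⁻¹ * gs' i := by
    funext i; rw [hustar]; rfl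
  have hW : (Matrix.vecMulVec ustar ustar).mulVec b = (ustar ⬝ᵥ b) • ustar := by
    funext i
    simp [Matrix.mulVec, Matrix.vecMulVec_apply, dotProduct, Finset.mul_sum, mul_assoc,
      smul_eq_mul, mul_comm]
  have hRHS : u' ⬝ᵥ (((‖gstar‖ ^ 2)⁻¹ •
      (Jᵀ * ((1 : Matrix (Fin m) (Fin m) ℝ) - Matrix.vecMulVec ustar ustar) * J)).mulVec v') =
      (‖gstar‖ ^ 2)⁻¹ * (a ⬝ᵥ b - (ustar ⬝ᵥ b) * (a ⬝ᵥ ustar)) := by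
    rw [Matrix.smul_mulVec, dotProduct_smul, ← Matrix.mulVec_mulVec,
      ← Matrix.mulVec_mulVec, Matrix.dotProduct_mulVec, Matrix.vecMul_transpose,
      Matrix.sub_mulVec, Matrix.one_mulVec, hW, dotProduct_sub, dotProduct_smul]
    simp [smul_eq_mul, hA]
    exact Or.inl rfl
  rw [hRHS]
  have h1 : a ⬝ᵥ ustar = ‖gstar‖⁻¹ * (gs' ⬝ᵥ a) := by
    rw [hust, dotProduct_comm]; simp [dotProduct, Finset.mul_sum, mul_assoc]
  have h2 : ustar ⬝ᵥ b = ‖gstar‖⁻¹ * (gs' ⬝ᵥ b) := by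
    rw [hust]; simp [dotProduct, Finset.mul_sum, mul_assoc]
  rw [h1, h2]
  field_simp
end
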